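/- Suppose 1 < R₀ < 2e and let Q* ∈ (0,1) satisfy F(Q*) = 0. Then Q* is a locally attractive fixed point of the iteration map T: there exists ε > 0 such that for every initial value Q⁰ with |Q⁰ - Q*| ≤ ε, the iterates Q^{(j)} = T^j(Q⁰) converge to Q* as j → ∞. Moreover, the trivial fixed point Q = 0 is locally repelling in the sense that T'(0) = R₀ > 1. -/

import Mathlib

open MeasureTheory Real Set Filter

/-- `Λ(x,s) = ∫_s^x θ(t) dt`. -/
noncomputable def Lam (θ : ℝ → ℝ) (x s : ℝ) : ℝ := ∫ t in s..x, θ t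

/-- `w(x;Q) = Q e^{-γx} ∫₀^x e^{γs} θ(s) e^{-Q Λ(x,s)} ds`. -/
noncomputable def w (γ : ℝ) (θ : ℝ → ℝ) (Q x : ℝ) : ℝ :=
  Q * Real.exp (-γ * x) * ∫ s in (0:ℝ)..x, Real.exp (γ * s) * θ s * Real.exp (-Q * Lam θ x s)
/-- The kernel `k(x,s) = (p(x)/N)·θ(s)·e^{-γ(x-s)}`. -/
noncomputable def kker (γ N : ℝ) (p θ : ℝ → ℝ) (x s : ℝ) : ℝ :=
  (p x / N) * θ s * Real.exp (-γ * (x - s))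

/-- The triangle `Ω = {(x,s) : 0 ≤ s ≤ x ≤ A}` (first coordinate `x`, second `s`). -/
def Tri (A : ℝ) : Set (ℝ × ℝ) := {q | 0 ≤ q.2 ∧ q.2 ≤ q.1 ∧ q.1 ≤ A}

/-- Basic reproductive number `R₀ = ∬_Ω k(x,s) d(s,x)`. -/
noncomputable def R0 (γ N A : ℝ) (p θ : ℝ → ℝ) : ℝ :=
  ∫ q in Tri A, kker γ N p θ q.1 q.2

/-- `F(Q) = 1 - ∬_Ω k(x,s) e^{-Q Λ(x,s)} d(s,x)`. -/
noncomputable def FF (γ N A : ℝ) (p θ : ℝ → ℝ) (Q : ℝ) : ℝ :=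
  1 - ∫ q in Tri A, kker γ N p θ q.1 q.2 * Real.exp (-Q * Lam θ q.1 q.2)

/-- Iteration map `T(Q) = Q·(1 - F(Q))`. -/
noncomputable def TT (γ N A : ℝ) (p θ : ℝ → ℝ) (Q : ℝ) : ℝ :=
  Q * (1 - FF γ N A p θ Q)

/-!
Write `T(Q) = Q K(Q)` with `K(Q) = ∬_Ω k e^{-QΛ} = 1 - F(Q)`, so that
`T'(Q) = K(Q) - Q J(Q)` with `J(Q) = ∬_Ω Λ k e^{-QΛ}` (differentiation under the integral sign,
`Ω` being compact). At `Q = 0` this is `K(0) = R₀`. At the root, `K(Q*) = 1`, so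
`T'(Q*) = 1 - Q* J(Q*)`. Since `t e^{-t} ≤ 1/e`, `Q* J(Q*) ≤ R₀/e < 2`; and `J(Q*) > 0`, for
otherwise `Λ k = 0` a.e. and `K(Q*) = K(0) = R₀ > 1`. Hence `|T'(Q*)| < 1`, and by the mean value
theorem `T` contracts a neighbourhood of `Q*` towards `Q*`.
-/

open Topology

theorem tendsto_iterate_of_dist_le_mul {X : Type*} [PseudoMetricSpace X] {f : X → X} {x₀ : X}
    {r c : ℝ} (hc₀ : 0 ≤ c) (hc₁ : c < 1)
    (hf : ∀ x ∈ Metric.closedBall x₀ r, dist (f x) x₀ ≤ c * dist x x₀)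
    {x : X} (hx : x ∈ Metric.closedBall x₀ r) :
    Tendsto (fun n => f^[n] x) atTop (𝓝 x₀) := by
  have hiter : ∀ n : ℕ, dist (f^[n] x) x₀ ≤ c ^ n * dist x x₀ := by
    intro n
    induction n with
    | zero => simp
    | succ n ih =>
      have hmem : f^[n] x ∈ Metric.closedBall x₀ r :=
        ih.trans <| (mul_le_of_le_one_left dist_nonneg (pow_le_one₀ hc₀ hc₁.le)).trans hx
      rw [Function.iterate_succ_apply', pow_succ', mul_assoc]
      exact (hf _ hmem).trans (mul_le_mul_of_nonneg_left ih hc₀)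
  refine tendsto_iff_dist_tendsto_zero.mpr (squeeze_zero (fun _ => dist_nonneg) hiter ?_)
  simpa using (tendsto_pow_atTop_nhds_zero_of_lt_one hc₀ hc₁).mul_const (dist x x₀)

theorem exists_tendsto_iterate_of_abs_deriv_lt_one {f f' : ℝ → ℝ} {x₀ : ℝ}
    (hfix : f x₀ = x₀) (hf : ∀ᶠ x in 𝓝 x₀, HasDerivAt f (f' x) x)
    (hf' : ContinuousAt f' x₀) (hlt : |f' x₀| < 1) :
    ∃ ε > 0, ∀ x, |x - x₀| ≤ ε → Tendsto (fun n => f^[n] x) atTop (𝓝 x₀) := by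
  set c := (|f' x₀| + 1) / 2 with hc_def
  have hc₀ : 0 ≤ c := by positivity
  have hc₁ : c < 1 := by rw [hc_def]; linarith
  have hnear : ∀ᶠ x in 𝓝 x₀, HasDerivAt f (f' x) x ∧ |f' x| < c :=
    hf.and (hf'.abs.eventually_lt_const (by dsimp only; rw [hc_def]; linarith))
  obtain ⟨δ, hδ, hball⟩ := Metric.eventually_nhds_iff.mp hnear
  have hsub : Metric.closedBall x₀ (δ / 2) ⊆ Metric.ball x₀ δ :=
    Metric.closedBall_subset_ball (by linarith)
  have hcontract : ∀ x ∈ Metric.closedBall x₀ (δ / 2), dist (f x) x₀ ≤ c * dist x x₀ := by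
    intro x hx
    have hmvt := (convex_closedBall x₀ (δ / 2)).norm_image_sub_le_of_norm_hasDerivWithin_le
      (fun y hy => (hball (hsub hy)).1.hasDerivWithinAt)
      (fun y hy => (hball (hsub hy)).2.le) (Metric.mem_closedBall_self (by linarith)) hx
    rwa [hfix, ← dist_eq_norm, ← dist_eq_norm] at hmvt
  refine ⟨δ / 2, by positivity, fun x hx => tendsto_iterate_of_dist_le_mul hc₀ hc₁ hcontract ?_⟩
  rwa [Metric.mem_closedBall, Real.dist_eq]

theorem hasDerivAt_integral_mul_exp_neg_mul {X : Type*} [MeasurableSpace X] {μ : Measure X}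
    {c L : X → ℝ} {M : ℝ} (hc : Integrable c μ) (hL : AEStronglyMeasurable L μ)
    (hLM : ∀ᵐ x ∂μ, |L x| ≤ M) (Q : ℝ) :
    HasDerivAt (fun Q => ∫ x, c x * exp (-Q * L x) ∂μ)
      (-∫ x, L x * c x * exp (-Q * L x) ∂μ) Q := by
  have hexp_meas : ∀ Q : ℝ, AEStronglyMeasurable (fun x => exp (-Q * L x)) μ := fun Q =>
    continuous_exp.comp_aestronglyMeasurable (hL.const_mul (-Q))
  have hexp_le : ∀ Q' ∈ Metric.ball Q 1, ∀ x, |L x| ≤ M →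
      exp (-Q' * L x) ≤ exp ((|Q| + 1) * M) := by
    intro Q' hQ' x hx
    have hQ'le : |Q'| ≤ |Q| + 1 := by
      have := abs_sub_abs_le_abs_sub Q' Q
      rw [Metric.mem_ball, Real.dist_eq] at hQ'
      linarith
    refine exp_le_exp.mpr <| (le_abs_self _).trans ?_
    rw [abs_mul, abs_neg]
    exact mul_le_mul hQ'le hx (abs_nonneg _) (by positivity)
  have key := hasDerivAt_integral_of_dominated_loc_of_deriv_le (μ := μ) (x₀ := Q)
    (F := fun Q x => c x * exp (-Q * L x))
    (F' := fun Q x => -(L x * c x * exp (-Q * L x)))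
    (bound := fun x => M * exp ((|Q| + 1) * M) * |c x|)
    (Metric.ball_mem_nhds Q one_pos)
    (Eventually.of_forall fun Q => hc.1.mul (hexp_meas Q))
    (hc.mul_bdd (hexp_meas Q) (hLM.mono fun x hx => by
      rw [Real.norm_eq_abs, abs_exp]; exact hexp_le Q (Metric.mem_ball_self one_pos) x hx))
    ((hL.mul hc.1).mul (hexp_meas Q)).neg
    (hLM.mono fun x hx Q' hQ' => by
      rw [norm_neg, Real.norm_eq_abs, abs_mul, abs_mul, abs_exp]
      have := hexp_le Q' hQ' x hx
      have hM : 0 ≤ M := (abs_nonneg _).trans hx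
      calc |L x| * |c x| * exp (-Q' * L x) ≤ M * |c x| * exp ((|Q| + 1) * M) := by gcongr
        _ = M * exp ((|Q| + 1) * M) * |c x| := by ring)
    (hc.abs.const_mul _)
    (Eventually.of_forall fun x Q' _ =>
      (((hasDerivAt_neg Q').mul_const (L x)).exp.const_mul (c x)).congr_deriv (by ring))
  simpa only [integral_neg] using key.2

theorem IsCompact.hasDerivAt_setIntegral_mul_exp_neg_mul {X : Type*} [TopologicalSpace X]
    [T2Space X] [MeasurableSpace X] [OpensMeasurableSpace X] {μ : Measure X}
    [IsFiniteMeasureOnCompacts μ] {K : Set X} (hK : IsCompact K) {c L : X → ℝ}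
    (hc : ContinuousOn c K) (hL : ContinuousOn L K) (Q : ℝ) :
    HasDerivAt (fun Q => ∫ x in K, c x * exp (-Q * L x) ∂μ)
      (-∫ x in K, L x * c x * exp (-Q * L x) ∂μ) Q := by
  obtain ⟨M, hM⟩ := hK.exists_bound_of_continuousOn hL
  exact hasDerivAt_integral_mul_exp_neg_mul (hc.integrableOn_compact hK)
    (hL.integrableOn_compact hK).aestronglyMeasurable
    (ae_restrict_of_forall_mem hK.measurableSet hM) Q

theorem Tri_subset_Icc_prod (A : ℝ) : Tri A ⊆ Icc 0 A ×ˢ Icc 0 A :=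
  fun _ ⟨h₀, hsx, hxA⟩ => ⟨⟨h₀.trans hsx, hxA⟩, ⟨h₀, hsx.trans hxA⟩⟩

theorem isCompact_Tri (A : ℝ) : IsCompact (Tri A) :=
  (isCompact_Icc.prod isCompact_Icc).of_isClosed_subset
    ((isClosed_le continuous_const continuous_snd).inter
      ((isClosed_le continuous_snd continuous_fst).inter
        (isClosed_le continuous_fst continuous_const)))
    (Tri_subset_Icc_prod A)

theorem continuousOn_intervalIntegral_Icc_prod {θ : ℝ → ℝ} {a b : ℝ}
    (hθ : ContinuousOn θ (Icc a b)) :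
    ContinuousOn (fun q : ℝ × ℝ => ∫ t in q.2..q.1, θ t) (Icc a b ×ˢ Icc a b) := by
  rcases lt_or_ge b a with hba | hab
  · simp [Icc_eq_empty_of_lt hba]
  have huIcc : uIcc a b = Icc a b := uIcc_of_le hab
  have hint : IntervalIntegrable θ volume a b :=
    (hθ.mono huIcc.le).intervalIntegrable
  have hprim := intervalIntegral.continuousOn_primitive_interval' hint left_mem_uIcc
  rw [huIcc] at hprim
  have hint_of_mem : ∀ x ∈ Icc a b, IntervalIntegrable θ volume a x := fun x hx =>
    hint.mono_set (uIcc_subset_uIcc left_mem_uIcc (huIcc ▸ hx))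
  refine ((hprim.comp continuousOn_fst fun _ hq => hq.1).sub
    (hprim.comp continuousOn_snd fun _ hq => hq.2)).congr fun q hq => ?_
  exact (intervalIntegral.integral_interval_sub_left (hint_of_mem _ hq.1)
    (hint_of_mem _ hq.2)).symm

section Model

variable {γ N A : ℝ} {p θ : ℝ → ℝ}

noncomputable def kerLaplace (γ N A : ℝ) (p θ : ℝ → ℝ) (Q : ℝ) : ℝ :=
  ∫ q in Tri A, kker γ N p θ q.1 q.2 * exp (-Q * Lam θ q.1 q.2)

noncomputable def lamMoment (γ N A : ℝ) (p θ : ℝ → ℝ) (Q : ℝ) : ℝ :=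
  ∫ q in Tri A, Lam θ q.1 q.2 * kker γ N p θ q.1 q.2 * exp (-Q * Lam θ q.1 q.2)

theorem kerLaplace_zero : kerLaplace γ N A p θ 0 = R0 γ N A p θ := by
  simp [kerLaplace, R0]

theorem FF_eq_one_sub_kerLaplace (Q : ℝ) : FF γ N A p θ Q = 1 - kerLaplace γ N A p θ Q := rfl

theorem TT_eq_mul_kerLaplace : TT γ N A p θ = fun Q => Q * kerLaplace γ N A p θ Q := by
  funext Q
  rw [TT, FF_eq_one_sub_kerLaplace, sub_sub_cancel]

theorem continuousOn_Lam_Tri (hθ : ContinuousOn θ (Icc 0 A)) :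
    ContinuousOn (fun q : ℝ × ℝ => Lam θ q.1 q.2) (Tri A) :=
  (continuousOn_intervalIntegral_Icc_prod hθ).mono (Tri_subset_Icc_prod A)

theorem Lam_nonneg_of_mem_Tri (hθ : ∀ x ∈ Icc 0 A, 0 ≤ θ x) {q : ℝ × ℝ} (hq : q ∈ Tri A) :
    0 ≤ Lam θ q.1 q.2 :=
  intervalIntegral.integral_nonneg hq.2.1 fun t ht => hθ t ⟨hq.1.trans ht.1, ht.2.trans hq.2.2⟩

theorem continuousOn_kker_Tri (hp : ContinuousOn p (Icc 0 A)) (hθ : ContinuousOn θ (Icc 0 A)) :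
    ContinuousOn (fun q : ℝ × ℝ => kker γ N p θ q.1 q.2) (Tri A) :=
  (((hp.comp continuousOn_fst fun _ hq => (Tri_subset_Icc_prod A hq).1).div_const N).mul
    (hθ.comp continuousOn_snd fun _ hq => (Tri_subset_Icc_prod A hq).2)).mul
    (by fun_prop)

theorem kker_nonneg_of_mem_Tri (hN : 0 ≤ N) (hp : ∀ x ∈ Icc 0 A, 0 ≤ p x)
    (hθ : ∀ x ∈ Icc 0 A, 0 ≤ θ x) {q : ℝ × ℝ} (hq : q ∈ Tri A) : 0 ≤ kker γ N p θ q.1 q.2 := by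
  have := hp _ (Tri_subset_Icc_prod A hq).1
  have := hθ _ (Tri_subset_Icc_prod A hq).2
  unfold kker
  positivity

theorem hasDerivAt_kerLaplace (hp : ContinuousOn p (Icc 0 A)) (hθ : ContinuousOn θ (Icc 0 A))
    (Q : ℝ) : HasDerivAt (kerLaplace γ N A p θ) (-lamMoment γ N A p θ Q) Q :=
  (isCompact_Tri A).hasDerivAt_setIntegral_mul_exp_neg_mul (continuousOn_kker_Tri hp hθ)
    (continuousOn_Lam_Tri hθ) Q

theorem continuous_lamMoment (hp : ContinuousOn p (Icc 0 A)) (hθ : ContinuousOn θ (Icc 0 A)) :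
    Continuous (lamMoment γ N A p θ) :=
  continuous_iff_continuousAt.mpr fun Q =>
    ((isCompact_Tri A).hasDerivAt_setIntegral_mul_exp_neg_mul
      ((continuousOn_Lam_Tri hθ).mul (continuousOn_kker_Tri hp hθ)) (continuousOn_Lam_Tri hθ)
      Q).continuousAt

theorem hasDerivAt_TT (hp : ContinuousOn p (Icc 0 A)) (hθ : ContinuousOn θ (Icc 0 A)) (Q : ℝ) :
    HasDerivAt (TT γ N A p θ) (kerLaplace γ N A p θ Q - Q * lamMoment γ N A p θ Q) Q := by
  rw [TT_eq_mul_kerLaplace]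
  exact ((hasDerivAt_id Q).mul (hasDerivAt_kerLaplace hp hθ Q)).congr_deriv (by simp; ring)

theorem mul_lamMoment_le (hN : 0 ≤ N) (hp : ContinuousOn p (Icc 0 A))
    (hθ : ContinuousOn θ (Icc 0 A)) (hp₀ : ∀ x ∈ Icc 0 A, 0 ≤ p x)
    (hθ₀ : ∀ x ∈ Icc 0 A, 0 ≤ θ x) (Q : ℝ) :
    Q * lamMoment γ N A p θ Q ≤ exp (-1) * R0 γ N A p θ := by
  have hL := continuousOn_Lam_Tri hθ
  have hk := continuousOn_kker_Tri (γ := γ) (N := N) hp hθ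
  rw [lamMoment, R0, ← integral_const_mul, ← integral_const_mul]
  refine setIntegral_mono_on
    ((hL.mul hk).mul (by fun_prop) |>.integrableOn_compact (isCompact_Tri A) |>.const_mul Q)
    (hk.integrableOn_compact (isCompact_Tri A) |>.const_mul _)
    (isCompact_Tri A).measurableSet fun q hq => ?_
  calc Q * (Lam θ q.1 q.2 * kker γ N p θ q.1 q.2 * exp (-Q * Lam θ q.1 q.2))
      = Q * Lam θ q.1 q.2 * exp (-(Q * Lam θ q.1 q.2)) * kker γ N p θ q.1 q.2 := by ring_nf
    _ ≤ exp (-1) * kker γ N p θ q.1 q.2 :=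
      mul_le_mul_of_nonneg_right (mul_exp_neg_le_exp_neg_one _)
        (kker_nonneg_of_mem_Tri hN hp₀ hθ₀ hq)

theorem lamMoment_pos (hN : 0 ≤ N) (hp : ContinuousOn p (Icc 0 A))
    (hθ : ContinuousOn θ (Icc 0 A)) (hp₀ : ∀ x ∈ Icc 0 A, 0 ≤ p x)
    (hθ₀ : ∀ x ∈ Icc 0 A, 0 ≤ θ x) {Q : ℝ} (hne : kerLaplace γ N A p θ Q ≠ R0 γ N A p θ) :
    0 < lamMoment γ N A p θ Q := by
  have hnonneg : ∀ q ∈ Tri A,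
      0 ≤ Lam θ q.1 q.2 * kker γ N p θ q.1 q.2 * exp (-Q * Lam θ q.1 q.2) := fun q hq =>
    mul_nonneg (mul_nonneg (Lam_nonneg_of_mem_Tri hθ₀ hq) (kker_nonneg_of_mem_Tri hN hp₀ hθ₀ hq))
      (exp_pos _).le
  refine (setIntegral_nonneg (isCompact_Tri A).measurableSet hnonneg).lt_of_ne fun hzero => hne ?_
  have hL := continuousOn_Lam_Tri hθ
  have hint : IntegrableOn
      (fun q : ℝ × ℝ => Lam θ q.1 q.2 * kker γ N p θ q.1 q.2 * exp (-Q * Lam θ q.1 q.2)) (Tri A) :=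
    (hL.mul (continuousOn_kker_Tri hp hθ)).mul (by fun_prop)
      |>.integrableOn_compact (isCompact_Tri A)
  have hae := (integral_eq_zero_iff_of_nonneg_ae
    (ae_restrict_of_forall_mem (isCompact_Tri A).measurableSet hnonneg) hint).mp hzero.symm
  refine integral_congr_ae (hae.mono fun q hq => ?_)
  rcases mul_eq_zero.mp (mul_eq_zero.mp hq |>.resolve_right (exp_pos _).ne') with h | h <;>
    simp [h]

end Model

theorem endemic_fixed_point_attractive_general (γ A N : ℝ) (hN : 0 < N)
    (θ p : ℝ → ℝ)
    (hθc : ContinuousOn θ (Set.Icc 0 A)) (hθpos : ∀ x ∈ Set.Icc 0 A, 0 < θ x)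
    (hpc : ContinuousOn p (Set.Icc 0 A)) (hppos : ∀ x ∈ Set.Icc 0 A, 0 < p x)
    (hR0gt : 1 < R0 γ N A p θ) (hR0lt : R0 γ N A p θ < 2 * Real.exp 1)
    (Qstar : ℝ) (hQmem : Qstar ∈ Set.Ioo (0:ℝ) 1) (hQroot : FF γ N A p θ Qstar = 0) :
    (∃ ε > 0, ∀ Q0 : ℝ, |Q0 - Qstar| ≤ ε →
      Filter.Tendsto (fun j : ℕ => (TT γ N A p θ)^[j] Q0) Filter.atTop (nhds Qstar)) ∧
    (HasDerivAt (TT γ N A p θ) (R0 γ N A p θ) 0 ∧ 1 < R0 γ N A p θ) := by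
  have hθ₀ : ∀ x ∈ Icc 0 A, 0 ≤ θ x := fun x hx => (hθpos x hx).le
  have hp₀ : ∀ x ∈ Icc 0 A, 0 ≤ p x := fun x hx => (hppos x hx).le
  have hT := hasDerivAt_TT (γ := γ) (N := N) hpc hθc
  have hroot : kerLaplace γ N A p θ Qstar = 1 := by
    rw [FF_eq_one_sub_kerLaplace] at hQroot; linarith
  refine ⟨exists_tendsto_iterate_of_abs_deriv_lt_one ?_ (Eventually.of_forall hT) ?_ ?_,
    by simpa [kerLaplace_zero] using hT 0, hR0gt⟩
  · simp [TT_eq_mul_kerLaplace, hroot]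
  · exact (hasDerivAt_kerLaplace hpc hθc Qstar).continuousAt.sub
      (continuousAt_id.mul (continuous_lamMoment hpc hθc).continuousAt)
  · have hpos := mul_pos hQmem.1
      (lamMoment_pos hN.le hpc hθc hp₀ hθ₀ (hroot.trans_ne hR0gt.ne))
    have hle := mul_lamMoment_le (γ := γ) hN.le hpc hθc hp₀ hθ₀ Qstar
    have hlt : exp (-1) * R0 γ N A p θ < 2 := by
      rw [exp_neg, inv_mul_lt_iff₀ (exp_pos 1)]
      linarith
    rw [hroot, abs_lt]
    constructor <;> linarith

/-- for `1 < R₀ < 2e`, the endemic fixed point `Q*` of `T` is locally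
attractive, while the trivial fixed point `0` is locally repelling (`T'(0) = R₀ > 1`). -/
theorem endemic_fixed_point_attractive (γ A N : ℝ) (hγ : 0 < γ) (hA : 0 < A) (hN : 0 < N)
    (θ p : ℝ → ℝ)
    (hθc : ContinuousOn θ (Set.Icc 0 A)) (hθpos : ∀ x ∈ Set.Icc 0 A, 0 < θ x)
    (hpc : ContinuousOn p (Set.Icc 0 A)) (hppos : ∀ x ∈ Set.Icc 0 A, 0 < p x)
    (hnorm : (1/N) * ∫ x in (0:ℝ)..A, p x = 1)
    (hR0gt : 1 < R0 γ N A p θ) (hR0lt : R0 γ N A p θ < 2 * Real.exp 1)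
    (Qstar : ℝ) (hQmem : Qstar ∈ Set.Ioo (0:ℝ) 1) (hQroot : FF γ N A p θ Qstar = 0) :
    (∃ ε > 0, ∀ Q0 : ℝ, |Q0 - Qstar| ≤ ε →
      Filter.Tendsto (fun j : ℕ => (TT γ N A p θ)^[j] Q0) Filter.atTop (nhds Qstar)) ∧
    (HasDerivAt (TT γ N A p θ) (R0 γ N A p θ) 0 ∧ 1 < R0 γ N A p θ) :=
  endemic_fixed_point_attractive_general γ A N hN θ p hθc hθpos hpc hppos hR0gt hR0lt Qstar hQmem
    hQroot
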